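/- arXiv:1809.04159 — 3 statements merged into one kernel-verified Lean document; each statement's English description precedes it below -/
import Mathlib

section
/- Let M and N be natural numbers with 1 ≤ M and 2M ≤ N. Let a : ℕ → ℝ be a sequence satisfying: a_k ≤ 1 + (a_{k+1} + a_{k−1})/2 for every integer k with M+1 ≤ k ≤ N−1; a_M ≤ 1 + (a_0 + a_{2M})/2; a_0 ≤ 1; and a_N ≤ 1. Then a_M ≤ M·(N² + 1)/N. -/
/-- Lemma (discrete convexity lemma for sequences): if a₀ ≤ 1, a_N ≤ 1,
a_k ≤ 1 + (a_{k+1}+a_{k-1})/2 for M+1 ≤ k ≤ N−1, and a_M ≤ 1 + (a₀+a_{2M})/2,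
then a_M ≤ M(N²+1)/N. -/
theorem statement15
    (M N : ℕ) (hM : 1 ≤ M) (hMN : 2 * M ≤ N)
    (a : ℕ → ℝ)
    (hmid : ∀ k : ℕ, M + 1 ≤ k → k ≤ N - 1 → a k ≤ 1 + (a (k + 1) + a (k - 1)) / 2)
    (hM2M : a M ≤ 1 + (a 0 + a (2 * M)) / 2)
    (h0 : a 0 ≤ 1) (hN : a N ≤ 1) :
    a M ≤ (M : ℝ) * ((N : ℝ) ^ 2 + 1) / (N : ℝ) := by
  have hN2 : 2 ≤ N := by omega
  set c : ℕ → ℝ := fun k => a k + (k : ℝ) ^ 2 with hc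
  have hstep : ∀ j, M ≤ j → j + 1 ≤ N - 1 →
      c (j + 1) - c j ≤ c (j + 2) - c (j + 1) := by
    intro j hj hj2
    have h := hmid (j + 1) (by omega) hj2
    have e : j + 1 - 1 = j := by omega
    rw [e] at h
    simp only [hc]
    push_cast
    nlinarith [h]
  have hmono : ∀ j k, M ≤ j → j ≤ k → k ≤ N - 1 →
      c (j + 1) - c j ≤ c (k + 1) - c k := by
    intro j k hj hjk
    induction k, hjk using Nat.le_induction with
    | base => intro _; exact le_rfl
    | succ k hk ih =>
      intro hkN
      have h1 : k ≤ N - 1 := by omega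
      exact le_trans (ih h1) (hstep k (by omega) hkN)
  have tele1 : ∑ i ∈ Finset.range M, (c (M + i + 1) - c (M + i)) = c (2 * M) - c M := by
    have := Finset.sum_range_sub (fun i => c (M + i)) M
    simp only [Nat.add_zero] at this
    rw [show 2 * M = M + M by ring]
    rw [← this]
    apply Finset.sum_congr rfl
    intro i _
    congr 1
  have tele2 : ∑ i ∈ Finset.range (N - 2 * M), (c (2 * M + i + 1) - c (2 * M + i))
      = c N - c (2 * M) := by
    have := Finset.sum_range_sub (fun i => c (2 * M + i)) (N - 2 * M)
    simp only [Nat.add_zero, ← Nat.add_assoc] at this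
    rw [this, show 2 * M + (N - 2 * M) = N by omega]
  set t : ℝ := c (2 * M) - c (2 * M - 1) with ht
  have hA : c (2 * M) - c M ≤ (M : ℝ) * t := by
    rw [← tele1]
    calc ∑ i ∈ Finset.range M, (c (M + i + 1) - c (M + i))
        ≤ ∑ _i ∈ Finset.range M, t := by
          apply Finset.sum_le_sum
          intro i hi
          have hi' : i < M := Finset.mem_range.mp hi
          have := hmono (M + i) (2 * M - 1) (by omega) (by omega) (by omega)
          have e : 2 * M - 1 + 1 = 2 * M := by omega
          rw [e] at this
          exact this
      _ = (M : ℝ) * t := by simp [mul_comm]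
  have hB : ((N : ℝ) - 2 * M) * t ≤ c N - c (2 * M) := by
    rw [← tele2]
    calc ((N : ℝ) - 2 * M) * t = ∑ _i ∈ Finset.range (N - 2 * M), t := by
          rw [Finset.sum_const, Finset.card_range, nsmul_eq_mul]
          congr 1
          push_cast [Nat.cast_sub hMN]
          ring
      _ ≤ ∑ i ∈ Finset.range (N - 2 * M), (c (2 * M + i + 1) - c (2 * M + i)) := by
          apply Finset.sum_le_sum
          intro i hi
          have hi' : i < N - 2 * M := Finset.mem_range.mp hi
          have := hmono (2 * M - 1) (2 * M + i) (by omega) (by omega) (by omega)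
          have e : 2 * M - 1 + 1 = 2 * M := by omega
          rw [e] at this
          exact this
  -- combine
  have hcM : 2 * c M - c 0 ≤ c (2 * M) := by
    simp only [hc]
    push_cast
    nlinarith [hM2M, hM, (by exact_mod_cast hM : (1:ℝ) ≤ (M:ℝ))]
  have hNM : (0:ℝ) ≤ (N : ℝ) - 2 * M := by
    have : (2 * M : ℝ) ≤ N := by exact_mod_cast hMN
    linarith
  have hMpos : (0:ℝ) < (M : ℝ) := by exact_mod_cast hM
  have hchord : ((N : ℝ) - M) * c (2 * M) ≤ ((N : ℝ) - 2 * M) * c M + (M : ℝ) * c N := by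
    nlinarith [mul_le_mul_of_nonneg_left hA hNM, mul_le_mul_of_nonneg_left hB (le_of_lt hMpos)]
  have hkey : (N : ℝ) * c M ≤ ((N : ℝ) - M) * c 0 + (M : ℝ) * c N := by
    nlinarith [mul_le_mul_of_nonneg_left hcM (by linarith : (0:ℝ) ≤ (N : ℝ) - M)]
  have hNpos : (0:ℝ) < (N : ℝ) := by positivity
  rw [le_div_iff₀ hNpos]
  have hc0 : c 0 ≤ 1 := by simp [hc, h0]
  have hcN : c N ≤ 1 + (N : ℝ) ^ 2 := by simp only [hc]; linarith
  have hcMdef : c M = a M + (M : ℝ) ^ 2 := rfl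
  have hnm : (0:ℝ) ≤ (N:ℝ) - (M:ℝ) := by linarith
  have b1 := mul_le_mul_of_nonneg_left hc0 hnm
  have b2 := mul_le_mul_of_nonneg_left hcN (le_of_lt hMpos)
  have hM1 : (1:ℝ) ≤ (M:ℝ) := by exact_mod_cast hM
  have h1 : (N:ℝ) ≤ (N:ℝ) * (M:ℝ) ^ 2 := by
    have hm2 : (1:ℝ) ≤ (M:ℝ) ^ 2 := by nlinarith
    calc (N:ℝ) = (N:ℝ) * 1 := by ring
      _ ≤ (N:ℝ) * (M:ℝ) ^ 2 := mul_le_mul_of_nonneg_left hm2 (le_of_lt hNpos)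
  have e1 : (N:ℝ) * c M = (N:ℝ) * a M + (N:ℝ) * (M:ℝ) ^ 2 := by rw [hcMdef]; ring
  linarith [hkey, b1, b2, h1, e1]
end

section
/- Let a, b ∈ ℝ satisfy a + b > 1, 2a + b > 2, and a > 1/2. Then ∬_{ℝ×ℝ} (1+|x|)^{−a}·(1+|y|)^{−a}·(1+|x−y|)^{−b} dx dy < ∞. Consequently, there exists a constant C such that ∬_{ℝ×ℝ} (1+|x|)^{−a}·(1+|y|)^{−a}·(1+|x−y|)^{−b}·|f(x)|·|g(y)| dx dy ≤ C·‖f‖_{L^∞(ℝ)}·‖g‖_{L^∞(ℝ)} for all f, g ∈ L^∞(ℝ). -/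
open MeasureTheory
open scoped ENNReal

noncomputable section

/-!
Let `q = min (a + b) (min (2a) (a + b/2))`, so `q > 1`, and write `u = 1 + |x|`, `v = 1 + |y|`,
`z = 1 + |x - y|`. Using `z ≤ u v` when `b < 0`, and otherwise playing the largest of `u, v, z`
off against the other two, the kernel `u^(-a) v^(-a) z^(-b)` is at most
`(u v)^(-q) + (v z)^(-q) + (u z)^(-q)`. Up to a shear
of `ℝ × ℝ`, each of these three terms is the tensor square of the integrable weight
`(1 + |t|)^(-q)`, so the double integral is at most `3 (∫ (1 + |t|)^(-q))^2 < ∞`. The bilinear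
bound then follows by pulling out the essential suprema of `f` and `g`.
-/

namespace MeasureTheory

section Shear

variable {G : Type*} [MeasurableSpace G] [AddGroup G] [MeasurableAdd₂ G] [MeasurableNeg G]
  {μ : Measure G} [SFinite μ] [μ.IsAddRightInvariant]

theorem lintegral_prod_pairwise_mul {f : G → ℝ≥0∞} (hf : Measurable f) :
    ∫⁻ p, (f p.1 * f p.2 + f p.2 * f (p.1 - p.2) + f p.1 * f (p.2 - p.1)) ∂μ.prod μ =
      3 * (∫⁻ x, f x ∂μ) ^ 2 := by
  have hsq : ∫⁻ p, f p.1 * f p.2 ∂μ.prod μ = (∫⁻ x, f x ∂μ) ^ 2 := by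
    rw [lintegral_prod_mul hf.aemeasurable hf.aemeasurable, sq]
  have hprod : Measurable fun p : G × G => f p.1 * f p.2 := by fun_prop
  have hsub_prod : ∫⁻ p, f p.2 * f (p.1 - p.2) ∂μ.prod μ = (∫⁻ x, f x ∂μ) ^ 2 := by
    rw [← hsq, ← (measurePreserving_sub_prod μ μ).lintegral_comp hprod]
    simp only [mul_comm]
  have hprod_sub : ∫⁻ p, f p.1 * f (p.2 - p.1) ∂μ.prod μ = (∫⁻ x, f x ∂μ) ^ 2 := by
    rw [← hsq, ← (measurePreserving_prod_sub μ μ).lintegral_comp hprod]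
  rw [lintegral_add_left (by fun_prop), lintegral_add_left (by fun_prop), hsq, hsub_prod,
    hprod_sub]
  ring

end Shear

theorem lintegral_lintegral_mul_le_of_ae_le {α β : Type*} [MeasurableSpace α] [MeasurableSpace β]
    {μ : Measure α} {ν : Measure β} (K : α → β → ℝ≥0∞) {F : α → ℝ≥0∞} {G : β → ℝ≥0∞}
    {A B : ℝ≥0∞} (hF : ∀ᵐ x ∂μ, F x ≤ A) (hG : ∀ᵐ y ∂ν, G y ≤ B) (hA : A ≠ ∞) (hB : B ≠ ∞) :
    ∫⁻ x, ∫⁻ y, K x y * F x * G y ∂ν ∂μ ≤ (∫⁻ x, ∫⁻ y, K x y ∂ν ∂μ) * A * B :=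
  calc ∫⁻ x, ∫⁻ y, K x y * F x * G y ∂ν ∂μ ≤ ∫⁻ x, ∫⁻ y, K x y * (A * B) ∂ν ∂μ := by
        refine lintegral_mono_ae (hF.mono fun x hx => lintegral_mono_ae (hG.mono fun y hy => ?_))
        rw [← mul_assoc]
        gcongr
    _ = (∫⁻ x, ∫⁻ y, K x y ∂ν ∂μ) * A * B := by
        simp_rw [lintegral_mul_const' _ _ (ENNReal.mul_ne_top hA hB), mul_assoc]

end MeasureTheory

namespace SteinWeiss

open Real

section ThreeWeights

variable {u v z a b q : ℝ}

theorem mul_rpow_le_of_exponent_nonpos (hu : 1 ≤ u) (hv : 1 ≤ v) (hz : 1 ≤ z)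
    (hzuv : z ≤ u * v) (hb : b ≤ 0) (hq : q ≤ a + b) :
    (u * v) ^ q ≤ u ^ a * v ^ a * z ^ b :=
  calc (u * v) ^ q ≤ (u * v) ^ (a + b) :=
        rpow_le_rpow_of_exponent_le (one_le_mul_of_one_le_of_one_le hu hv) hq
    _ = u ^ a * v ^ a * (u * v) ^ b := by
        rw [rpow_add (by positivity), mul_rpow (by positivity) (by positivity)]
    _ ≤ u ^ a * v ^ a * z ^ b :=
        mul_le_mul_of_nonneg_left (rpow_le_rpow_of_nonpos (by positivity) hzuv hb)
          (by positivity)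

theorem mul_rpow_le_of_largest_third (hu : 1 ≤ u) (hv : 1 ≤ v) (huz : u ≤ z) (hvz : v ≤ z)
    (hb : 0 ≤ b) (hq : q ≤ a + b / 2) :
    (u * v) ^ q ≤ u ^ a * v ^ a * z ^ b :=
  calc (u * v) ^ q ≤ (u * v) ^ (a + b / 2) :=
        rpow_le_rpow_of_exponent_le (one_le_mul_of_one_le_of_one_le hu hv) hq
    _ = u ^ a * v ^ a * (u * v) ^ (b / 2) := by
        rw [rpow_add (by positivity), mul_rpow (by positivity) (by positivity)]
    _ ≤ u ^ a * v ^ a * (z * z) ^ (b / 2) := by gcongr; linarith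
    _ = u ^ a * v ^ a * z ^ b := by
        rw [mul_rpow (by linarith) (by linarith), ← rpow_add (by linarith), add_halves]

/-- The largest weight `u` pays for the other two through `u ^ a ≥ v ^ c * z ^ (a - c)`, where
`c = min a (b / 2)` balances the exponents of `v` and `z`. -/
theorem mul_rpow_le_of_largest_first (hv : 1 ≤ v) (hz : 1 ≤ z) (hvu : v ≤ u) (hzu : z ≤ u)
    (ha : 0 ≤ a) (hb : 0 ≤ b) (hq2 : q ≤ 2 * a) (hq3 : q ≤ a + b / 2) :
    (v * z) ^ q ≤ u ^ a * v ^ a * z ^ b := by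
  set c := min a (b / 2)
  have hc0 : 0 ≤ c := le_min ha (by linarith)
  have hca : c ≤ a := min_le_left _ _
  have hcb : c ≤ b / 2 := min_le_right _ _
  have hqc : q ≤ a + c := by rw [← min_add_add_left]; exact le_min (by linarith) hq3
  have hu : 0 < u := by linarith
  calc (v * z) ^ q = v ^ q * z ^ q := mul_rpow (by linarith) (by linarith)
    _ ≤ v ^ (a + c) * z ^ (a - c + b) := by gcongr; linarith
    _ = (v ^ c * z ^ (a - c)) * v ^ a * z ^ b := by
        rw [rpow_add (by linarith), rpow_add (by linarith)]; ring
    _ ≤ (u ^ c * u ^ (a - c)) * v ^ a * z ^ b := by gcongr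
    _ = u ^ a * v ^ a * z ^ b := by rw [← rpow_add hu, add_sub_cancel]

theorem rpow_neg_mul_le_add (hu : 1 ≤ u) (hv : 1 ≤ v) (hz : 1 ≤ z) (hzuv : z ≤ u * v)
    (ha : 0 ≤ a) (hq1 : q ≤ a + b) (hq2 : q ≤ 2 * a) (hq3 : q ≤ a + b / 2) :
    u ^ (-a) * v ^ (-a) * z ^ (-b) ≤ (u * v) ^ (-q) + (v * z) ^ (-q) + (u * z) ^ (-q) := by
  have key : (u * v) ^ q ≤ u ^ a * v ^ a * z ^ b ∨ (v * z) ^ q ≤ u ^ a * v ^ a * z ^ b ∨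
      (u * z) ^ q ≤ u ^ a * v ^ a * z ^ b := by
    rcases lt_or_ge b 0 with hb | hb
    · exact .inl (mul_rpow_le_of_exponent_nonpos hu hv hz hzuv hb.le hq1)
    rcases le_total u v with huv | hvu
    · rcases le_total v z with hvz | hzv
      · exact .inl (mul_rpow_le_of_largest_third hu hv (huv.trans hvz) hvz hb hq3)
      · rw [mul_comm (u ^ a)]
        exact .inr (.inr (mul_rpow_le_of_largest_first hu hz huv hzv ha hb hq2 hq3))
    · rcases le_total u z with huz | hzu
      · exact .inl (mul_rpow_le_of_largest_third hu hv huz (hvu.trans huz) hb hq3)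
      · exact .inr (.inl (mul_rpow_le_of_largest_first hv hz hvu hzu ha hb hq2 hq3))
  have hu0 : 0 < u := by linarith
  have hv0 : 0 < v := by linarith
  have hz0 : 0 < z := by linarith
  have huv_nonneg : 0 ≤ (u * v) ^ (-q) := by positivity
  have hvz_nonneg : 0 ≤ (v * z) ^ (-q) := by positivity
  have huz_nonneg : 0 ≤ (u * z) ^ (-q) := by positivity
  rw [rpow_neg hu0.le, rpow_neg hv0.le, rpow_neg hz0.le, ← mul_inv, ← mul_inv]
  rcases key with h | h | h <;>
  · have h_inv := inv_anti₀ (by positivity) h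
    rw [← rpow_neg (by positivity)] at h_inv
    linarith

end ThreeWeights

def decayWeight (q x : ℝ) : ℝ≥0∞ := ENNReal.ofReal ((1 + |x|) ^ (-q))

@[fun_prop]
theorem measurable_decayWeight (q : ℝ) : Measurable (decayWeight q) := by
  unfold decayWeight; fun_prop

theorem lintegral_decayWeight_lt_top {q : ℝ} (hq : 1 < q) : ∫⁻ x, decayWeight q x < ∞ := by
  have h : Integrable (fun x : ℝ => (1 + ‖x‖) ^ (-q)) := integrable_one_add_norm (by simpa)
  simpa [decayWeight] using
    (hasFiniteIntegral_iff_ofReal (.of_forall fun x => by positivity)).1 h.hasFiniteIntegral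

theorem one_add_abs_sub_le_mul (x y : ℝ) : 1 + |x - y| ≤ (1 + |x|) * (1 + |y|) := by
  nlinarith [abs_sub x y, abs_nonneg x, abs_nonneg y]

theorem ofReal_kernel_le {a b q : ℝ} (ha : 0 ≤ a) (hq1 : q ≤ a + b) (hq2 : q ≤ 2 * a)
    (hq3 : q ≤ a + b / 2) (x y : ℝ) :
    ENNReal.ofReal ((1 + |x|) ^ (-a) * (1 + |y|) ^ (-a) * (1 + |x - y|) ^ (-b)) ≤
      decayWeight q x * decayWeight q y + decayWeight q y * decayWeight q (x - y) +
        decayWeight q x * decayWeight q (y - x) := by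
  have one_le (t : ℝ) : 1 ≤ 1 + |t| := le_add_of_nonneg_right (abs_nonneg t)
  have h := rpow_neg_mul_le_add (one_le x) (one_le y) (one_le (x - y))
    (one_add_abs_sub_le_mul x y) ha hq1 hq2 hq3
  rw [mul_rpow (by positivity) (by positivity), mul_rpow (by positivity) (by positivity),
    mul_rpow (by positivity) (by positivity)] at h
  simp only [decayWeight, abs_sub_comm y x]
  rw [← ENNReal.ofReal_mul (by positivity), ← ENNReal.ofReal_mul (by positivity),
    ← ENNReal.ofReal_mul (by positivity), ← ENNReal.ofReal_add (by positivity) (by positivity),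
    ← ENNReal.ofReal_add (by positivity) (by positivity)]
  exact ENNReal.ofReal_le_ofReal h

theorem lintegral_lintegral_kernel_lt_top {a b : ℝ} (hab : 1 < a + b) (h2ab : 2 < 2 * a + b)
    (ha : 1 / 2 < a) :
    ∫⁻ x : ℝ, ∫⁻ y : ℝ,
      ENNReal.ofReal ((1 + |x|) ^ (-a) * (1 + |y|) ^ (-a) * (1 + |x - y|) ^ (-b)) < ∞ := by
  set q := min (a + b) (min (2 * a) (a + b / 2))
  have hq : 1 < q := lt_min hab (lt_min (by linarith) (by linarith))
  have hq1 : q ≤ a + b := min_le_left _ _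
  have hq2 : q ≤ 2 * a := (min_le_right _ _).trans (min_le_left _ _)
  have hq3 : q ≤ a + b / 2 := (min_le_right _ _).trans (min_le_right _ _)
  calc _ ≤ ∫⁻ x : ℝ, ∫⁻ y : ℝ, (decayWeight q x * decayWeight q y +
          decayWeight q y * decayWeight q (x - y) + decayWeight q x * decayWeight q (y - x)) :=
        lintegral_mono fun x => lintegral_mono fun y =>
          ofReal_kernel_le (by linarith) hq1 hq2 hq3 x y
    _ = 3 * (∫⁻ x, decayWeight q x) ^ 2 := by
        rw [← lintegral_prod_pairwise_mul (μ := volume) (measurable_decayWeight q),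
          lintegral_prod _ (by fun_prop)]
    _ < ∞ := by
        have := lintegral_decayWeight_lt_top hq
        finiteness

end SteinWeiss

/-- Lemma (endpoint for the p > 2 Stein–Weiss theorem): if a + b > 1, 2a + b > 2
and a > 1/2 then the kernel (1+|x|)^{−a}(1+|y|)^{−a}(1+|x−y|)^{−b} is integrable on
ℝ × ℝ, and the associated bilinear form is bounded on L^∞(ℝ) × L^∞(ℝ). -/
theorem statement17
    (a b : ℝ) (hab : 1 < a + b) (h2ab : 2 < 2 * a + b) (ha : 1 / 2 < a) :
    (∫⁻ x : ℝ, ∫⁻ y : ℝ,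
        ENNReal.ofReal
          ((1 + |x|) ^ (-a) * (1 + |y|) ^ (-a) * (1 + |x - y|) ^ (-b))) < ⊤ ∧
    ∃ C : ℝ, 0 ≤ C ∧ ∀ f g : ℝ → ℂ,
      MemLp f ⊤ volume → MemLp g ⊤ volume →
      (∫⁻ x : ℝ, ∫⁻ y : ℝ,
          ENNReal.ofReal
            ((1 + |x|) ^ (-a) * (1 + |y|) ^ (-a) * (1 + |x - y|) ^ (-b)) *
            (‖f x‖₊ : ℝ≥0∞) * (‖g y‖₊ : ℝ≥0∞)) ≤
        ENNReal.ofReal C * eLpNorm f ⊤ volume * eLpNorm g ⊤ volume := by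
  have hfin := SteinWeiss.lintegral_lintegral_kernel_lt_top hab h2ab ha
  obtain ⟨C, hC0, hC⟩ : ∃ C : ℝ, 0 ≤ C ∧ ENNReal.ofReal C = _ :=
    ⟨_, ENNReal.toReal_nonneg, ENNReal.ofReal_toReal hfin.ne⟩
  refine ⟨hfin, C, hC0, fun f g hf hg => ?_⟩
  rw [hC]
  refine lintegral_lintegral_mul_le_of_ae_le _ ?_ ?_ hf.eLpNorm_ne_top hg.eLpNorm_ne_top <;>
  · rw [eLpNorm_exponent_top]
    exact ae_le_eLpNormEssSup
end
end

section
/- Let p ∈ (2,∞] and let a, b ∈ ℝ satisfy a + b > 1 − 1/p, 2a + b > 2 − 2/p, and a > 1/2 − 1/p (with the convention 1/∞ = 0). Then there exists a constant C such that for all f, g ∈ L^p(ℝ), ∬_{ℝ×ℝ} (1+|x|)^{−a}·(1+|y|)^{−a}·(1+|x−y|)^{−b}·|f(x)|·|g(y)| dx dy ≤ C·‖f‖_{L^p(ℝ)}·‖g‖_{L^p(ℝ)}. -/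
/-!
For `b ≤ 0`, Peetre's inequality `1 + |x - y| ≤ (1 + |x|)(1 + |y|)` bounds the kernel by
`w(x) w(y)` with `w = (1 + |·|)^{-(a+b)}`, so the form factorises into two weighted `L¹` norms;
Hölder bounds each by `‖w‖_{p'} ‖f‖_p`, and `w ∈ L^{p'}` exactly when `a + b > 1 - 1/p`.

For `b > 0`, write `F = (1 + |·|)^{-a} |f|`, `G = (1 + |·|)^{-a} |g|`, `k = (1 + |·|)^{-b}`.
Young's inequality `∫∫ F(x) G(y) k(x - y) ≤ ‖k‖_{1/u} ‖F‖_r ‖G‖_r` with `1/r = 1 - u/2`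
(proved by three-factor Hölder on `ℝ × ℝ`) and Hölder `‖F‖_r ≤ ‖(1 + |·|)^{-a}‖_σ ‖f‖_p`
with `1/σ = 1/r - 1/p` reduce everything to `k ∈ L^{1/u}`, i.e. `u < b`, and
`(1 + |·|)^{-a} ∈ L^σ`, i.e. `2 - 2/p - 2a < u`. Such a `u ∈ (0, 1)` exists because
`2a + b > 2 - 2/p` and `a > 1/2 - 1/p`.
-/

open MeasureTheory
open scoped ENNReal

noncomputable section

namespace ENNReal

theorem rpow_rpow_mul_rpow_rpow_eq_self (z : ℝ≥0∞) {e c d : ℝ} (hc : 0 ≤ c) (hd : 0 ≤ d)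
    (h : e * (c + d) = 1) : (z ^ e) ^ c * (z ^ e) ^ d = z := by
  rw [← rpow_add_of_nonneg _ _ hc hd, ← rpow_mul, h, rpow_one]

theorem mul_mul_eq_rpow_mul_rpow_mul_rpow (x y z : ℝ≥0∞) {u : ℝ} (hu0 : 0 < u) (hu1 : u ≤ 1) :
    x * y * z = (z ^ u⁻¹ * x ^ (1 - u / 2)⁻¹) ^ (u / 2) * (z ^ u⁻¹ * y ^ (1 - u / 2)⁻¹) ^ (u / 2)
      * (x ^ (1 - u / 2)⁻¹ * y ^ (1 - u / 2)⁻¹) ^ (1 - u) := by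
  have hu : 0 ≤ u / 2 := by positivity
  have hu' : 0 ≤ 1 - u := by linarith
  have hr : (1 - u / 2)⁻¹ * (u / 2 + (1 - u)) = 1 := by
    rw [show u / 2 + (1 - u) = 1 - u / 2 by ring]; exact inv_mul_cancel₀ (by linarith)
  have hs : u⁻¹ * (u / 2 + u / 2) = 1 := by field_simp; ring
  rw [mul_rpow_of_nonneg _ _ hu, mul_rpow_of_nonneg _ _ hu, mul_rpow_of_nonneg _ _ hu']
  calc x * y * z
    _ = ((x ^ (1 - u / 2)⁻¹) ^ (u / 2) * (x ^ (1 - u / 2)⁻¹) ^ (1 - u))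
        * ((y ^ (1 - u / 2)⁻¹) ^ (u / 2) * (y ^ (1 - u / 2)⁻¹) ^ (1 - u))
        * ((z ^ u⁻¹) ^ (u / 2) * (z ^ u⁻¹) ^ (u / 2)) := by
      rw [rpow_rpow_mul_rpow_rpow_eq_self x hu hu' hr,
        rpow_rpow_mul_rpow_rpow_eq_self y hu hu' hr, rpow_rpow_mul_rpow_rpow_eq_self z hu hu hs]
    _ = _ := by ring

end ENNReal

namespace MeasureTheory

theorem lintegral_mul_mul_rpow_le {α : Type*} [MeasurableSpace α] {μ : Measure α}
    {f g h : α → ℝ≥0∞} (hf : AEMeasurable f μ) (hg : AEMeasurable g μ) (hh : AEMeasurable h μ)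
    {p q r : ℝ} (hp : 0 ≤ p) (hq : 0 ≤ q) (hr : 0 ≤ r) (hpqr : p + q + r = 1) :
    ∫⁻ x, f x ^ p * g x ^ q * h x ^ r ∂μ ≤
      (∫⁻ x, f x ∂μ) ^ p * (∫⁻ x, g x ∂μ) ^ q * (∫⁻ x, h x ∂μ) ^ r := by
  have := ENNReal.lintegral_prod_norm_pow_le (μ := μ) Finset.univ (f := ![f, g, h])
    (p := ![p, q, r]) (fun i _ => by fin_cases i <;> assumption)
    (by simpa [Fin.sum_univ_three] using hpqr) (fun i _ => by fin_cases i <;> assumption)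
  simpa [Fin.prod_univ_three, mul_assoc] using this

theorem eLpNorm_inv_ofReal_eq_lintegral_rpow {α : Type*} [MeasurableSpace α] {μ : Measure α}
    (h : α → ℝ≥0∞) {t : ℝ} (ht : 0 < t) :
    eLpNorm h (ENNReal.ofReal t)⁻¹ μ = (∫⁻ x, h x ^ t⁻¹ ∂μ) ^ t := by
  rw [eLpNorm_eq_lintegral_rpow_enorm_toReal (by simp) (by simpa using ht)]
  simp [ENNReal.toReal_inv, ENNReal.toReal_ofReal ht.le]

section Young

variable {α : Type*} [MeasurableSpace α] [AddGroup α] [MeasurableAdd₂ α] [MeasurableNeg α]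
  {μ : Measure α} [SFinite μ] [μ.IsAddLeftInvariant] [μ.IsAddRightInvariant] [μ.IsNegInvariant]

theorem lintegral_lintegral_mul_mul_sub_le {f g k : α → ℝ≥0∞} (hf : AEMeasurable f μ)
    (hg : AEMeasurable g μ) (hk : Measurable k) {u : ℝ} (hu0 : 0 < u) (hu1 : u ≤ 1) :
    ∫⁻ x, ∫⁻ y, f x * g y * k (x - y) ∂μ ∂μ ≤
      (∫⁻ z, k z ^ u⁻¹ ∂μ) ^ u * (∫⁻ x, f x ^ (1 - u / 2)⁻¹ ∂μ) ^ (1 - u / 2)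
        * (∫⁻ y, g y ^ (1 - u / 2)⁻¹ ∂μ) ^ (1 - u / 2) := by
  have hu : 0 ≤ u / 2 := by positivity
  have hu' : 0 ≤ 1 - u := by linarith
  set r := (1 - u / 2)⁻¹
  set K := ∫⁻ z, k z ^ u⁻¹ ∂μ
  set I := ∫⁻ x, f x ^ r ∂μ
  set J := ∫⁻ y, g y ^ r ∂μ
  have hf₂ : AEMeasurable (fun z : α × α => f z.1) (μ.prod μ) :=
    hf.comp_quasiMeasurePreserving Measure.quasiMeasurePreserving_fst
  have hg₂ : AEMeasurable (fun z : α × α => g z.2) (μ.prod μ) :=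
    hg.comp_quasiMeasurePreserving Measure.quasiMeasurePreserving_snd
  have hk₂ : Measurable fun z : α × α => k (z.1 - z.2) := hk.comp measurable_sub
  have hA : AEMeasurable (fun z : α × α => k (z.1 - z.2) ^ u⁻¹ * f z.1 ^ r) (μ.prod μ) :=
    (hk₂.pow_const _).aemeasurable.mul (hf₂.pow_const _)
  have hB : AEMeasurable (fun z : α × α => k (z.1 - z.2) ^ u⁻¹ * g z.2 ^ r) (μ.prod μ) :=
    (hk₂.pow_const _).aemeasurable.mul (hg₂.pow_const _)
  have hC : AEMeasurable (fun z : α × α => f z.1 ^ r * g z.2 ^ r) (μ.prod μ) :=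
    (hf₂.pow_const _).mul (hg₂.pow_const _)
  have hkf : ∫⁻ z : α × α, k (z.1 - z.2) ^ u⁻¹ * f z.1 ^ r ∂μ.prod μ = K * I := by
    rw [lintegral_prod _ hA, ← lintegral_const_mul'' _ (hf.pow_const _)]
    refine lintegral_congr fun x => ?_
    dsimp only
    rw [lintegral_mul_const _ (by fun_prop), lintegral_sub_left_eq_self (k · ^ u⁻¹) x]
  have hkg : ∫⁻ z : α × α, k (z.1 - z.2) ^ u⁻¹ * g z.2 ^ r ∂μ.prod μ = K * J := by
    rw [lintegral_prod_symm _ hB, ← lintegral_const_mul'' _ (hg.pow_const _)]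
    refine lintegral_congr fun y => ?_
    dsimp only
    rw [lintegral_mul_const _ (by fun_prop), lintegral_sub_right_eq_self (k · ^ u⁻¹) y]
  have hfg : ∫⁻ z : α × α, f z.1 ^ r * g z.2 ^ r ∂μ.prod μ = I * J := by
    rw [lintegral_prod _ hC]
    exact lintegral_lintegral_mul (hf.pow_const _) (hg.pow_const _)
  calc ∫⁻ x, ∫⁻ y, f x * g y * k (x - y) ∂μ ∂μ
    _ = ∫⁻ z : α × α, f z.1 * g z.2 * k (z.1 - z.2) ∂μ.prod μ :=
      (lintegral_prod _ ((hf₂.mul hg₂).mul hk₂.aemeasurable)).symm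
    _ = ∫⁻ z : α × α, (k (z.1 - z.2) ^ u⁻¹ * f z.1 ^ r) ^ (u / 2)
          * (k (z.1 - z.2) ^ u⁻¹ * g z.2 ^ r) ^ (u / 2) * (f z.1 ^ r * g z.2 ^ r) ^ (1 - u)
          ∂μ.prod μ :=
      lintegral_congr fun z => ENNReal.mul_mul_eq_rpow_mul_rpow_mul_rpow _ _ _ hu0 hu1
    _ ≤ (K * I) ^ (u / 2) * (K * J) ^ (u / 2) * (I * J) ^ (1 - u) := by
      rw [← hkf, ← hkg, ← hfg]
      exact lintegral_mul_mul_rpow_le hA hB hC hu hu hu' (by ring)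
    _ = K ^ u * I ^ (1 - u / 2) * J ^ (1 - u / 2) := by
      rw [ENNReal.mul_rpow_of_nonneg _ _ hu, ENNReal.mul_rpow_of_nonneg _ _ hu,
        ENNReal.mul_rpow_of_nonneg _ _ hu']
      calc _ = (K ^ (u / 2) * K ^ (u / 2)) * (I ^ (u / 2) * I ^ (1 - u))
            * (J ^ (u / 2) * J ^ (1 - u)) := by ring
        _ = _ := by
          rw [← ENNReal.rpow_add_of_nonneg _ _ hu hu, ← ENNReal.rpow_add_of_nonneg _ _ hu hu',
            ← ENNReal.rpow_add_of_nonneg _ _ hu hu', add_halves,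
            show u / 2 + (1 - u) = 1 - u / 2 by ring]

theorem lintegral_lintegral_mul_mul_sub_le_eLpNorm {f g k : α → ℝ≥0∞} (hf : AEMeasurable f μ)
    (hg : AEMeasurable g μ) (hk : Measurable k) {u : ℝ} (hu0 : 0 < u) (hu1 : u ≤ 1) :
    ∫⁻ x, ∫⁻ y, f x * g y * k (x - y) ∂μ ∂μ ≤
      eLpNorm k (ENNReal.ofReal u)⁻¹ μ * eLpNorm f (ENNReal.ofReal (1 - u / 2))⁻¹ μ
        * eLpNorm g (ENNReal.ofReal (1 - u / 2))⁻¹ μ := by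
  have hr : 0 < 1 - u / 2 := by linarith
  rw [eLpNorm_inv_ofReal_eq_lintegral_rpow _ hu0, eLpNorm_inv_ofReal_eq_lintegral_rpow _ hr,
    eLpNorm_inv_ofReal_eq_lintegral_rpow _ hr]
  exact lintegral_lintegral_mul_mul_sub_le hf hg hk hu0 hu1

end Young

end MeasureTheory

namespace SteinWeiss

def weight (c x : ℝ) : ℝ := (1 + |x|) ^ (-c)

theorem weight_pos (c x : ℝ) : 0 < weight c x := by unfold weight; positivity

@[fun_prop]
theorem measurable_weight (c : ℝ) : Measurable (weight c) := by unfold weight; fun_prop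

theorem weight_rpow (c t x : ℝ) : weight c x ^ t = weight (c * t) x := by
  rw [weight, weight, ← Real.rpow_mul (by positivity), neg_mul]

theorem weight_mul_weight (c d x : ℝ) : weight c x * weight d x = weight (c + d) x := by
  rw [weight, weight, weight, ← Real.rpow_add (by positivity), neg_add]

theorem weight_sub_le {b : ℝ} (hb : b ≤ 0) (x y : ℝ) :
    weight b (x - y) ≤ weight b x * weight b y := by
  rw [weight, weight, weight, ← Real.mul_rpow (by positivity) (by positivity)]
  refine Real.rpow_le_rpow (by positivity) ?_ (by linarith)
  nlinarith [abs_sub x y, abs_nonneg x, abs_nonneg y, mul_nonneg (abs_nonneg x) (abs_nonneg y)]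

theorem eLpNorm_weight_lt_top {c : ℝ} {q : ℝ≥0∞} (hq0 : q ≠ 0) (hq : q ≠ ∞)
    (hc : q⁻¹.toReal < c) : eLpNorm (weight c) q volume < ∞ := by
  have hq' : 0 < q.toReal := ENNReal.toReal_pos hq0 hq
  have hcq : 1 < c * q.toReal := by
    rwa [ENNReal.toReal_inv, inv_lt_iff_one_lt_mul₀ hq'] at hc
  rw [eLpNorm_eq_lintegral_rpow_enorm_toReal hq0 hq]
  refine ENNReal.rpow_lt_top_of_nonneg (by positivity) (ne_of_lt ?_)
  calc ∫⁻ x, ‖weight c x‖ₑ ^ q.toReal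
    _ = ∫⁻ x : ℝ, ENNReal.ofReal ((1 + ‖x‖) ^ (-(c * q.toReal))) := by
      refine lintegral_congr fun x => ?_
      rw [Real.enorm_eq_ofReal (weight_pos c x).le, ENNReal.ofReal_rpow_of_nonneg
        (weight_pos c x).le hq'.le, weight_rpow, weight, Real.norm_eq_abs]
    _ < ∞ := finite_integral_one_add_norm (by simpa using hcq)

variable {E : Type*} [NormedAddCommGroup E] [NormedSpace ℝ E]

theorem exists_eLpNorm_weight_smul_le {p r : ℝ≥0∞} {c : ℝ} (hr : r ≠ 0) (hpr : p⁻¹ < r⁻¹)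
    (hc : r⁻¹.toReal - p⁻¹.toReal < c) :
    ∃ K < ∞, ∀ f : ℝ → E, AEStronglyMeasurable f volume →
      eLpNorm (weight c • f) r volume ≤ K * eLpNorm f p volume := by
  have hr' : r⁻¹ ≠ ∞ := ENNReal.inv_ne_top.mpr hr
  set σ := (r⁻¹ - p⁻¹)⁻¹
  have : ENNReal.HolderTriple σ p r := ⟨by rw [inv_inv, tsub_add_cancel_of_le hpr.le]⟩
  refine ⟨eLpNorm (weight c) σ volume, eLpNorm_weight_lt_top ?_ ?_ ?_, fun f hf =>
    eLpNorm_smul_le_mul_eLpNorm hf (measurable_weight c).aestronglyMeasurable⟩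
  · exact ENNReal.inv_ne_zero.mpr (ne_top_of_le_ne_top hr' tsub_le_self)
  · exact ENNReal.inv_ne_top.mpr (tsub_pos_of_lt hpr).ne'
  · rwa [inv_inv, ENNReal.toReal_sub_of_le hpr.le hr']

theorem enorm_weight_smul (c : ℝ) (f : ℝ → E) (x : ℝ) :
    ‖(weight c • f) x‖ₑ = ENNReal.ofReal (weight c x) * ‖f x‖ₑ := by
  rw [Pi.smul_apply', enorm_smul, Real.enorm_eq_ofReal (weight_pos c x).le]

def weightedForm (a b : ℝ) (f g : ℝ → E) : ℝ≥0∞ :=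
  ∫⁻ x, ∫⁻ y, ENNReal.ofReal (weight a x * weight a y * weight b (x - y)) * ‖f x‖ₑ * ‖g y‖ₑ

theorem aemeasurable_enorm_weight_smul (c : ℝ) {f : ℝ → E} (hf : AEStronglyMeasurable f volume) :
    AEMeasurable (fun x => ‖(weight c • f) x‖ₑ) volume :=
  ((measurable_weight c).aestronglyMeasurable.smul hf).enorm

theorem exists_weightedForm_le_of_nonpos {p : ℝ≥0∞} (hp : 1 < p) {a b : ℝ} (hb : b ≤ 0)
    (hab : 1 - p⁻¹.toReal < a + b) :
    ∃ K < ∞, ∀ f g : ℝ → E, AEStronglyMeasurable f volume → AEStronglyMeasurable g volume →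
      weightedForm a b f g ≤ K * eLpNorm f p volume * eLpNorm g p volume := by
  obtain ⟨K, hK, hHolder⟩ := exists_eLpNorm_weight_smul_le (E := E) (c := a + b) one_ne_zero
    (by simpa using hp) (by simpa using hab)
  refine ⟨K * K, ENNReal.mul_lt_top hK hK, fun f g hf hg => ?_⟩
  have hkernel (x y : ℝ) :
      weight a x * weight a y * weight b (x - y) ≤ weight (a + b) x * weight (a + b) y := by
    have := weight_pos a x; have := weight_pos a y
    calc _ ≤ weight a x * weight a y * (weight b x * weight b y) := by
          gcongr; exact weight_sub_le hb x y
      _ = _ := by rw [← weight_mul_weight, ← weight_mul_weight]; ring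
  calc weightedForm a b f g
    _ ≤ ∫⁻ x, ∫⁻ y, ‖(weight (a + b) • f) x‖ₑ * ‖(weight (a + b) • g) y‖ₑ := by
      refine lintegral_mono fun x => lintegral_mono fun y => ?_
      rw [enorm_weight_smul, enorm_weight_smul]
      calc _ ≤ ENNReal.ofReal (weight (a + b) x * weight (a + b) y) * ‖f x‖ₑ * ‖g y‖ₑ := by
            gcongr ENNReal.ofReal ?_ * _ * _
            exact hkernel x y
        _ = _ := by rw [ENNReal.ofReal_mul (weight_pos _ x).le]; ring
    _ = eLpNorm (weight (a + b) • f) 1 volume * eLpNorm (weight (a + b) • g) 1 volume := by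
      rw [lintegral_lintegral_mul (aemeasurable_enorm_weight_smul _ hf)
        (aemeasurable_enorm_weight_smul _ hg), eLpNorm_one_eq_lintegral_enorm,
        eLpNorm_one_eq_lintegral_enorm]
    _ ≤ K * eLpNorm f p volume * (K * eLpNorm g p volume) :=
      mul_le_mul' (hHolder f hf) (hHolder g hg)
    _ = K * K * eLpNorm f p volume * eLpNorm g p volume := by ring

theorem exists_weightedForm_le_of_pos {p : ℝ≥0∞} (hp : 2 < p) {a b : ℝ} (hb : 0 < b)
    (h2ab : 2 - 2 * p⁻¹.toReal < 2 * a + b) (ha : 1 / 2 - p⁻¹.toReal < a) :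
    ∃ K < ∞, ∀ f g : ℝ → E, AEStronglyMeasurable f volume → AEStronglyMeasurable g volume →
      weightedForm a b f g ≤ K * eLpNorm f p volume * eLpNorm g p volume := by
  have hp_inv_ne_top : p⁻¹ ≠ ∞ := ENNReal.inv_ne_top.mpr (zero_lt_two.trans hp).ne'
  have hp_inv : p⁻¹.toReal < 1 / 2 := by
    have := (ENNReal.toReal_lt_toReal hp_inv_ne_top (by simp)).mpr (ENNReal.inv_lt_inv.mpr hp)
    simpa using this
  obtain ⟨u, hu_lo, hu_hi⟩ :=
    exists_between (max_lt (lt_min one_pos hb) (lt_min (by linarith) (by linarith)) :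
      max 0 (2 - 2 * p⁻¹.toReal - 2 * a) < min 1 b)
  rw [max_lt_iff] at hu_lo
  rw [lt_min_iff] at hu_hi
  have hkb : eLpNorm (weight b) (ENNReal.ofReal u)⁻¹ volume < ∞ :=
    eLpNorm_weight_lt_top (by simp) (by simpa using hu_lo.1)
      (by rw [inv_inv, ENNReal.toReal_ofReal hu_lo.1.le]; exact hu_hi.2)
  obtain ⟨K, hK, hHolder⟩ := exists_eLpNorm_weight_smul_le (E := E) (p := p) (c := a)
    (r := (ENNReal.ofReal (1 - u / 2))⁻¹) (by simp)
    (by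
      rw [inv_inv, ← ENNReal.ofReal_toReal hp_inv_ne_top]
      exact (ENNReal.ofReal_lt_ofReal_iff (by linarith)).mpr (by linarith))
    (by rw [inv_inv, ENNReal.toReal_ofReal (by linarith)]; linarith)
  refine ⟨_, ENNReal.mul_lt_top hkb (ENNReal.mul_lt_top hK hK), fun f g hf hg => ?_⟩
  have hk : (fun z => ENNReal.ofReal (weight b z)) = fun z => ‖weight b z‖ₑ :=
    funext fun z => (Real.enorm_eq_ofReal (weight_pos b z).le).symm
  calc weightedForm a b f g
    _ = ∫⁻ x, ∫⁻ y, ‖(weight a • f) x‖ₑ * ‖(weight a • g) y‖ₑ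
          * ENNReal.ofReal (weight b (x - y)) := by
      refine lintegral_congr fun x => lintegral_congr fun y => ?_
      rw [enorm_weight_smul, enorm_weight_smul,
        ENNReal.ofReal_mul (mul_pos (weight_pos a x) (weight_pos a y)).le,
        ENNReal.ofReal_mul (weight_pos a x).le]
      ring
    _ ≤ eLpNorm (fun z => ENNReal.ofReal (weight b z)) (ENNReal.ofReal u)⁻¹ volume
          * eLpNorm (fun x => ‖(weight a • f) x‖ₑ) (ENNReal.ofReal (1 - u / 2))⁻¹ volume
          * eLpNorm (fun y => ‖(weight a • g) y‖ₑ) (ENNReal.ofReal (1 - u / 2))⁻¹ volume :=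
      lintegral_lintegral_mul_mul_sub_le_eLpNorm (aemeasurable_enorm_weight_smul a hf)
        (aemeasurable_enorm_weight_smul a hg) (measurable_weight b).ennreal_ofReal hu_lo.1
        hu_hi.1.le
    _ ≤ eLpNorm (weight b) (ENNReal.ofReal u)⁻¹ volume * (K * eLpNorm f p volume)
          * (K * eLpNorm g p volume) := by
      rw [hk, eLpNorm_enorm, eLpNorm_enorm, eLpNorm_enorm]
      gcongr
      exacts [hHolder f hf, hHolder g hg]
    _ = _ := by ring

end SteinWeiss

open SteinWeiss

/-- Theorem (Stein–Weiss type inequality, case 2 < p ≤ ∞, with the convention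
1/∞ = 0): the bilinear form with kernel (1+|x|)^{−a}(1+|y|)^{−a}(1+|x−y|)^{−b} is
bounded on L^p(ℝ) × L^p(ℝ). -/
theorem statement18
    (p : ℝ≥0∞) (hp : 2 < p)
    (a b : ℝ)
    (hab : 1 - (1 / p).toReal < a + b)
    (h2ab : 2 - 2 * (1 / p).toReal < 2 * a + b)
    (ha : 1 / 2 - (1 / p).toReal < a) :
    ∃ C : ℝ, 0 ≤ C ∧ ∀ f g : ℝ → ℂ,
      MemLp f p volume → MemLp g p volume →
      (∫⁻ x : ℝ, ∫⁻ y : ℝ,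
          ENNReal.ofReal
            ((1 + |x|) ^ (-a) * (1 + |y|) ^ (-a) * (1 + |x - y|) ^ (-b)) *
            (‖f x‖₊ : ℝ≥0∞) * (‖g y‖₊ : ℝ≥0∞)) ≤
        ENNReal.ofReal C * eLpNorm f p volume * eLpNorm g p volume := by
  rw [one_div p] at hab h2ab ha
  obtain ⟨K, hK, hbound⟩ : ∃ K < ∞, ∀ f g : ℝ → ℂ, AEStronglyMeasurable f volume →
      AEStronglyMeasurable g volume →
      weightedForm a b f g ≤ K * eLpNorm f p volume * eLpNorm g p volume := by
    rcases le_or_gt b 0 with hb | hb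
    · exact exists_weightedForm_le_of_nonpos (ENNReal.one_lt_two.trans hp) hb hab
    · exact exists_weightedForm_le_of_pos hp hb h2ab ha
  refine ⟨K.toReal, ENNReal.toReal_nonneg, fun f g hf hg => ?_⟩
  rw [ENNReal.ofReal_toReal hK.ne]
  exact hbound f g hf.1 hg.1
end
end
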